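/- Let α > 0 and β > 0. Then there is a unique K̃ > 2(α + β) with 2β · ∑_{n=1}^∞ 1/(K̃ n² − 2α) = 1, and for all square-summable real sequences (x_n), (y_n), one has α ∑_{n=1}^∞ (x_n + y_n)²/n² + β (∑_{n=1}^∞ (x_n + y_n)/n)² ≤ K̃ (∑_{n=1}^∞ x_n² + ∑_{n=1}^∞ y_n²). -/

import Mathlib

/-!
Write `F(K) = ∑_{n ≥ 1} 1 / (K n² - 2α)`. Cauchy–Schwarz with the positive weights
`w_n = K n² - 2α` gives
`(∑ z_n / n)² ≤ (∑ w_n z_n² / n²) (∑ 1 / w_n) = (K ∑ z_n² - 2α ∑ z_n² / n²) F(K)`,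
so when `2β F(K) = 1` we get `α ∑ z_n² / n² + β (∑ z_n / n)² ≤ (K / 2) ∑ z_n²`; take `z = x + y`
and use `(x + y)² ≤ 2 (x² + y²)`. Such a `K` exists and is unique because `F` is continuous and
strictly decreasing on `(2α, ∞)`, decays like `1 / K`, and its first term alone makes
`2β F(2(α + β)) > 1`.
-/

open Set

section CauchySchwarz

variable {ι : Type*} {r f g : ι → ℝ}

theorem summable_of_sq_le_mul (hf : ∀ i, 0 ≤ f i) (hg : ∀ i, 0 ≤ g i)
    (hrfg : ∀ i, r i ^ 2 ≤ f i * g i) (hfs : Summable f) (hgs : Summable g) : Summable r := by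
  refine ((hfs.add hgs).div_const 2).of_norm_bounded fun i => ?_
  refine abs_le_of_sq_le_sq ?_ (by linarith [hf i, hg i])
  nlinarith [hrfg i, sq_nonneg (f i - g i)]

theorem tsum_sq_le_tsum_mul_tsum_of_sq_le_mul (hf : ∀ i, 0 ≤ f i) (hg : ∀ i, 0 ≤ g i)
    (hrfg : ∀ i, r i ^ 2 ≤ f i * g i) (hfs : Summable f) (hgs : Summable g) :
    (∑' i, r i) ^ 2 ≤ (∑' i, f i) * ∑' i, g i := by
  have hrs := summable_of_sq_le_mul hf hg hrfg hfs hgs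
  refine le_of_tendsto' (hrs.hasSum.pow 2) fun s => ?_
  calc (∑ i ∈ s, r i) ^ 2 ≤ (∑ i ∈ s, f i) * ∑ i ∈ s, g i :=
        Finset.sum_sq_le_sum_mul_sum_of_sq_le_mul s (fun i _ => hf i) (fun i _ => hg i)
          fun i _ => hrfg i
    _ ≤ (∑' i, f i) * ∑' i, g i := by
        gcongr
        · exact Finset.sum_nonneg fun i _ => hg i
        · exact tsum_nonneg hf
        · exact hfs.sum_le_tsum s fun i _ => hf i
        · exact hgs.sum_le_tsum s fun i _ => hg i

end CauchySchwarz

section SquareSummable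

variable {ι : Type*} {x y : ι → ℝ}

theorem summable_sq_add (hx : Summable fun i => x i ^ 2) (hy : Summable fun i => y i ^ 2) :
    Summable fun i => (x i + y i) ^ 2 :=
  ((hx.add hy).mul_left 2).of_nonneg_of_le (fun _ => sq_nonneg _) fun _ => add_sq_le

theorem tsum_sq_add_le (hx : Summable fun i => x i ^ 2) (hy : Summable fun i => y i ^ 2) :
    ∑' i, (x i + y i) ^ 2 ≤ 2 * (∑' i, x i ^ 2 + ∑' i, y i ^ 2) := by
  rw [← hx.tsum_add hy, ← tsum_mul_left]
  exact (summable_sq_add hx hy).tsum_le_tsum (fun _ => add_sq_le) ((hx.add hy).mul_left 2)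

end SquareSummable

noncomputable def invQuadSum (α K : ℝ) : ℝ := ∑' n : ℕ+, 1 / (K * ((n : ℕ) : ℝ) ^ 2 - 2 * α)

section InvQuadSum

variable {α K K' : ℝ}

theorem one_le_pnat_cast_sq (n : ℕ+) : (1 : ℝ) ≤ ((n : ℕ) : ℝ) ^ 2 :=
  one_le_pow₀ (Nat.one_le_cast.2 n.pos)

theorem summable_one_div_pnat_sq : Summable fun n : ℕ+ => 1 / ((n : ℕ) : ℝ) ^ 2 :=
  (Real.summable_one_div_nat_pow.mpr one_lt_two).comp_injective PNat.coe_injective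

theorem sub_mul_sq_le_mul_sq_sub (hα : 0 ≤ α) (n : ℕ+) :
    (K - 2 * α) * ((n : ℕ) : ℝ) ^ 2 ≤ K * ((n : ℕ) : ℝ) ^ 2 - 2 * α := by
  nlinarith [one_le_pnat_cast_sq n]

theorem mul_sq_sub_pos (hα : 0 ≤ α) (hK : 2 * α < K) (n : ℕ+) :
    0 < K * ((n : ℕ) : ℝ) ^ 2 - 2 * α :=
  (mul_pos (sub_pos.2 hK) (by positivity)).trans_le (sub_mul_sq_le_mul_sq_sub hα n)

theorem one_div_mul_sq_sub_le (hα : 0 ≤ α) (hK : 2 * α < K) (n : ℕ+) :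
    1 / (K * ((n : ℕ) : ℝ) ^ 2 - 2 * α) ≤ (K - 2 * α)⁻¹ * (1 / ((n : ℕ) : ℝ) ^ 2) := by
  rw [← one_div, one_div_mul_one_div]
  exact one_div_le_one_div_of_le (by have := sub_pos.2 hK; positivity)
    (sub_mul_sq_le_mul_sq_sub hα n)

theorem one_div_mul_sq_sub_le_of_le (hα : 0 ≤ α) (hK : 2 * α < K) (hKK' : K ≤ K') (n : ℕ+) :
    1 / (K' * ((n : ℕ) : ℝ) ^ 2 - 2 * α) ≤ 1 / (K * ((n : ℕ) : ℝ) ^ 2 - 2 * α) := by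
  gcongr
  exact mul_sq_sub_pos hα hK n

theorem summable_one_div_mul_sq_sub (hα : 0 ≤ α) (hK : 2 * α < K) :
    Summable fun n : ℕ+ => 1 / (K * ((n : ℕ) : ℝ) ^ 2 - 2 * α) :=
  (summable_one_div_pnat_sq.mul_left _).of_nonneg_of_le
    (fun n => (one_div_pos.2 (mul_sq_sub_pos hα hK n)).le) (one_div_mul_sq_sub_le hα hK)

theorem invQuadSum_le (hα : 0 ≤ α) (hK : 2 * α < K) :
    invQuadSum α K ≤ (K - 2 * α)⁻¹ * ∑' n : ℕ+, 1 / ((n : ℕ) : ℝ) ^ 2 := by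
  rw [← tsum_mul_left]
  exact (summable_one_div_mul_sq_sub hα hK).tsum_le_tsum (one_div_mul_sq_sub_le hα hK)
    (summable_one_div_pnat_sq.mul_left _)

theorem one_div_sub_lt_invQuadSum (hα : 0 ≤ α) (hK : 2 * α < K) :
    1 / (K - 2 * α) < invQuadSum α K := by
  have hpos n := one_div_pos.2 (mul_sq_sub_pos hα hK n)
  simpa [invQuadSum] using
    lt_hasSum (summable_one_div_mul_sq_sub hα hK).hasSum 1 (fun j _ => (hpos j).le)
    2 (by decide) (hpos 2)

theorem strictAntiOn_invQuadSum (hα : 0 ≤ α) : StrictAntiOn (invQuadSum α) (Ioi (2 * α)) := by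
  intro K₁ hK₁ K₂ hK₂ hlt
  refine (summable_one_div_mul_sq_sub hα hK₂).tsum_lt_tsum
    (one_div_mul_sq_sub_le_of_le hα hK₁ hlt.le) (i := 1) ?_ (summable_one_div_mul_sq_sub hα hK₁)
  have := mul_sq_sub_pos hα hK₁ 1
  gcongr

theorem continuousOn_invQuadSum (hα : 0 ≤ α) (hK : 2 * α < K) :
    ContinuousOn (invQuadSum α) (Ici K) := by
  refine continuousOn_tsum (fun n => ?_) (summable_one_div_mul_sq_sub hα hK) fun n K' hK' => ?_
  · refine continuousOn_const.div (by fun_prop) fun K' hK' => ?_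
    exact (mul_sq_sub_pos hα (hK.trans_le hK') n).ne'
  · rw [Real.norm_of_nonneg (one_div_pos.2 (mul_sq_sub_pos hα (hK.trans_le hK') n)).le]
    exact one_div_mul_sq_sub_le_of_le hα hK hK' n

end InvQuadSum

theorem existsUnique_two_mul_invQuadSum_eq_one {α β : ℝ} (hα : 0 < α) (hβ : 0 < β) :
    ∃! K : ℝ, K > 2 * (α + β) ∧ 2 * β * invQuadSum α K = 1 := by
  set c := 2 * (α + β)
  set S := ∑' n : ℕ+, 1 / ((n : ℕ) : ℝ) ^ 2
  have hS : 0 ≤ S := tsum_nonneg fun n => by positivity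
  set M := 2 * α + 4 * β * (1 + S)
  have hc : 2 * α < c := by linarith
  have hcM : c ≤ M := by nlinarith
  have hc_gt : 1 < 2 * β * invQuadSum α c := by
    have := one_div_sub_lt_invQuadSum hα.le hc
    rw [show c - 2 * α = 2 * β by ring] at this
    calc 1 = 2 * β * (1 / (2 * β)) := by field_simp
      _ < 2 * β * invQuadSum α c := by gcongr
  have hM_lt : 2 * β * invQuadSum α M < 1 := by
    have hM : 2 * α < M := hc.trans_le hcM
    calc 2 * β * invQuadSum α M ≤ 2 * β * ((M - 2 * α)⁻¹ * S) := by
          gcongr; exact invQuadSum_le hα.le hM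
      _ = S / (2 * (1 + S)) := by
          rw [show M - 2 * α = 4 * β * (1 + S) by ring]; field_simp; ring
      _ < 1 := by rw [div_lt_one (by positivity)]; linarith
  have hcont : ContinuousOn (fun K => 2 * β * invQuadSum α K) (Icc c M) :=
    (continuousOn_const.mul (continuousOn_invQuadSum hα.le hc)).mono Icc_subset_Ici_self
  obtain ⟨K, hK, hK_eq⟩ := intermediate_value_Ioo' hcM hcont ⟨hM_lt, hc_gt⟩
  refine ⟨K, ⟨hK.1, hK_eq⟩, fun K' ⟨hK', hK'_eq⟩ => ?_⟩
  refine (strictAntiOn_invQuadSum hα.le).injOn (hc.trans hK') (hc.trans hK.1) ?_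
  exact mul_left_cancel₀ (by positivity) (hK'_eq.trans hK_eq.symm)

theorem sq_tsum_div_le_mul_invQuadSum {α K : ℝ} (hα : 0 ≤ α) (hK : 2 * α < K) {z : ℕ+ → ℝ}
    (hz : Summable fun n => z n ^ 2) :
    (∑' n : ℕ+, z n / ((n : ℕ) : ℝ)) ^ 2 ≤
      (K * ∑' n : ℕ+, z n ^ 2 - 2 * α * ∑' n : ℕ+, z n ^ 2 / ((n : ℕ) : ℝ) ^ 2) *
        invQuadSum α K := by
  have hzn : Summable fun n : ℕ+ => z n ^ 2 / ((n : ℕ) : ℝ) ^ 2 :=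
    hz.of_nonneg_of_le (fun n => by positivity)
      fun n => div_le_self (sq_nonneg _) (one_le_pnat_cast_sq n)
  have hw (n : ℕ+) : (K * ((n : ℕ) : ℝ) ^ 2 - 2 * α) * (z n / ((n : ℕ) : ℝ)) ^ 2 =
      K * z n ^ 2 - 2 * α * (z n ^ 2 / ((n : ℕ) : ℝ) ^ 2) := by
    field_simp
  have hws :
      Summable fun n : ℕ+ => (K * ((n : ℕ) : ℝ) ^ 2 - 2 * α) * (z n / ((n : ℕ) : ℝ)) ^ 2 := by
    simp_rw [hw]
    exact (hz.mul_left K).sub (hzn.mul_left _)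
  have htsum : ∑' n : ℕ+, (K * ((n : ℕ) : ℝ) ^ 2 - 2 * α) * (z n / ((n : ℕ) : ℝ)) ^ 2 =
      K * ∑' n : ℕ+, z n ^ 2 - 2 * α * ∑' n : ℕ+, z n ^ 2 / ((n : ℕ) : ℝ) ^ 2 := by
    simp_rw [hw]
    rw [(hz.mul_left K).tsum_sub (hzn.mul_left _), tsum_mul_left, tsum_mul_left]
  rw [← htsum]
  have hpos := mul_sq_sub_pos hα hK
  refine tsum_sq_le_tsum_mul_tsum_of_sq_le_mul (fun n => by have := hpos n; positivity)
    (fun n => (one_div_pos.2 (hpos n)).le)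
    (fun n => (by rw [mul_one_div, mul_div_cancel_left₀ _ (hpos n).ne'])) hws
    (summable_one_div_mul_sq_sub hα hK)

theorem mul_tsum_sq_div_sq_add_mul_sq_tsum_div_le {α β K : ℝ} (hα : 0 ≤ α) (hβ : 0 ≤ β)
    (hK : 2 * α < K) (hKβ : 2 * β * invQuadSum α K = 1) {z : ℕ+ → ℝ}
    (hz : Summable fun n => z n ^ 2) :
    α * ∑' n : ℕ+, z n ^ 2 / ((n : ℕ) : ℝ) ^ 2 + β * (∑' n : ℕ+, z n / ((n : ℕ) : ℝ)) ^ 2 ≤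
      K / 2 * ∑' n : ℕ+, z n ^ 2 := by
  have hCS := mul_le_mul_of_nonneg_left (sq_tsum_div_le_mul_invQuadSum hα hK hz) hβ
  set Z := ∑' n : ℕ+, z n ^ 2
  set T := ∑' n : ℕ+, z n ^ 2 / ((n : ℕ) : ℝ) ^ 2
  linear_combination hCS + (K * Z - 2 * α * T) / 2 * hKβ

theorem stmt_3 (α β : ℝ) (hα : 0 < α) (hβ : 0 < β) :
    (∃! Kt : ℝ, Kt > 2 * (α + β) ∧
        2 * β * ∑' n : ℕ+, 1 / (Kt * ((n : ℕ) : ℝ) ^ 2 - 2 * α) = 1) ∧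
    ∀ Kt : ℝ, Kt > 2 * (α + β) →
      2 * β * ∑' n : ℕ+, 1 / (Kt * ((n : ℕ) : ℝ) ^ 2 - 2 * α) = 1 →
      ∀ x y : ℕ+ → ℝ, (Summable fun n => (x n) ^ 2) → (Summable fun n => (y n) ^ 2) →
        α * ∑' n : ℕ+, (x n + y n) ^ 2 / ((n : ℕ) : ℝ) ^ 2
          + β * (∑' n : ℕ+, (x n + y n) / ((n : ℕ) : ℝ)) ^ 2
          ≤ Kt * ((∑' n : ℕ+, (x n) ^ 2) + ∑' n : ℕ+, (y n) ^ 2) := by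
  refine ⟨existsUnique_two_mul_invQuadSum_eq_one hα hβ, fun K hK hKβ x y hx hy => ?_⟩
  have hKα : 2 * α < K := by linarith
  calc _ ≤ K / 2 * ∑' n : ℕ+, (x n + y n) ^ 2 :=
        mul_tsum_sq_div_sq_add_mul_sq_tsum_div_le hα.le hβ.le hKα hKβ (summable_sq_add hx hy)
    _ ≤ K / 2 * (2 * (∑' n : ℕ+, x n ^ 2 + ∑' n : ℕ+, y n ^ 2)) := by
        gcongr
        · linarith
        · exact tsum_sq_add_le hx hy
    _ = _ := by ring
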